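/- arXiv:2008.06951 — 4 statements merged into one kernel-verified Lean document; each statement's English description precedes it below -/
import Mathlib

section
/- Let L be a positive integer and let Γ be a finite subgroup of the orthogonal group O(L) acting linearly on Euclidean space ℝ^L. Then there exists a constant δ ∈ (0,1), depending only on Γ, with the following property: every point x ∈ ℝ^L is contained in some open ball B(p,r) with radius r ∈ [δ,1] such that for every γ ∈ Γ with γ·p ≠ p one has ‖γ·p − p‖ ≥ 200r (equivalently, the ball B(p,100r) is disjoint from its image γ(B(p,100r)) for every γ ∈ Γ not fixing p). -/
open Metric Set

/-- For a finite subgroup `Γ` of the orthogonal group `O(L)` (realized as the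
group of linear isometric self-equivalences of Euclidean space `ℝ^L`), there is a constant
`δ ∈ (0,1)` depending only on `Γ` such that every point `x ∈ ℝ^L` lies in an open ball `B(p,r)`
with `r ∈ [δ,1]` whose center is moved by at least `200 r` by every element of `Γ` not fixing
it. -/
theorem exists_uniform_orbifold_chart
    (L : ℕ) (hL : 0 < L)
    (Γ : Subgroup (EuclideanSpace ℝ (Fin L) ≃ₗᵢ[ℝ] EuclideanSpace ℝ (Fin L)))
    (hΓ : (Γ : Set (EuclideanSpace ℝ (Fin L) ≃ₗᵢ[ℝ] EuclideanSpace ℝ (Fin L))).Finite) :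
    ∃ δ : ℝ, δ ∈ Set.Ioo (0 : ℝ) 1 ∧
      ∀ x : EuclideanSpace ℝ (Fin L),
        ∃ (p : EuclideanSpace ℝ (Fin L)) (r : ℝ),
          r ∈ Set.Icc δ 1 ∧ x ∈ Metric.ball p r ∧
          ∀ γ ∈ Γ, γ p ≠ p → 200 * r ≤ ‖γ p - p‖ := by
  classical
  set E := EuclideanSpace ℝ (Fin L)
  set F : Finset (E ≃ₗᵢ[ℝ] E) := hΓ.toFinset with hF
  have hmemF : ∀ γ : E ≃ₗᵢ[ℝ] E, γ ∈ F ↔ γ ∈ Γ := fun γ => hΓ.mem_toFinset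
  set n := F.card with hn
  have hone : (1 : E ≃ₗᵢ[ℝ] E) ∈ F := (hmemF 1).2 Γ.one_mem
  have hn1 : 1 ≤ n := Finset.card_pos.mpr ⟨1, hone⟩
  set a : ℝ := 1 / 202 with ha
  have ha0 : 0 < a := by norm_num [ha]
  have ha1 : a < 1 := by norm_num [ha]
  refine ⟨a ^ n, ⟨pow_pos ha0 n, pow_lt_one₀ ha0.le ha1 (by omega)⟩, ?_⟩
  intro x
  set S : ℕ → Finset (E ≃ₗᵢ[ℝ] E) :=
    fun k => F.filter (fun γ => ‖γ x - x‖ < a ^ k) with hS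
  have hSsub : ∀ k, S k ⊆ F := fun k => Finset.filter_subset _ _
  have hSmono : ∀ k, S (k + 1) ⊆ S k := by
    intro k γ hγ
    simp only [hS, Finset.mem_filter] at hγ ⊢
    exact ⟨hγ.1, hγ.2.trans_le (pow_le_pow_of_le_one ha0.le ha1.le (by omega))⟩
  have hSone : ∀ k, (1 : E ≃ₗᵢ[ℝ] E) ∈ S k := by
    intro k
    simp only [hS, Finset.mem_filter]
    exact ⟨hone, by simp [pow_pos ha0]⟩
  -- pigeonhole: some consecutive levels agree
  have key : ∃ k < n, S k = S (k + 1) := by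
    by_contra h
    push_neg at h
    have hcard : ∀ k ≤ n, (S k).card + k ≤ (S 0).card := by
      intro k hk
      induction k with
      | zero => simp
      | succ m ih =>
        have h1 : S (m + 1) ⊂ S m :=
          HasSubset.Subset.ssubset_of_ne (hSmono m) (fun he => h m (by omega) he.symm)
        have := Finset.card_lt_card h1
        have := ih (by omega)
        omega
    have h1 : 1 ≤ (S n).card := Finset.card_pos.mpr ⟨1, hSone n⟩
    have h2 : (S 0).card ≤ n := Finset.card_le_card (hSsub 0)
    have := hcard n le_rfl
    omega
  obtain ⟨k, hkn, hkeq⟩ := key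
  set H := S (k + 1) with hH
  have hHmem : ∀ γ : E ≃ₗᵢ[ℝ] E, γ ∈ H ↔ γ ∈ F ∧ ‖γ x - x‖ < a ^ (k + 1) := by
    intro γ; simp [hH, hS]
  have hHF : ∀ γ ∈ H, γ ∈ Γ := fun γ hγ => (hmemF γ).1 ((hHmem γ).1 hγ).1
  have h202 : a ^ k = 202 * a ^ (k + 1) := by
    rw [pow_succ, ha]; ring
  -- closure under multiplication
  have hmul : ∀ γ ∈ H, ∀ g ∈ H, γ * g ∈ H := by
    intro γ hγ g hg
    rw [← hkeq]
    simp only [hS, Finset.mem_filter]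
    refine ⟨(hmemF _).2 (Γ.mul_mem (hHF γ hγ) (hHF g hg)), ?_⟩
    have hγ' := ((hHmem γ).1 hγ).2
    have hg' := ((hHmem g).1 hg).2
    have h1 : ‖(γ * g) x - x‖ ≤ ‖γ (g x) - γ x‖ + ‖γ x - x‖ := by
      simpa [LinearIsometryEquiv.coe_mul, Function.comp] using norm_sub_le_norm_sub_add_norm_sub (γ (g x)) (γ x) x
    have h2 : ‖γ (g x) - γ x‖ = ‖g x - x‖ := by
      rw [← LinearIsometryEquiv.map_sub, LinearIsometryEquiv.norm_map]
    calc ‖(γ * g) x - x‖ ≤ ‖g x - x‖ + ‖γ x - x‖ := by rw [h2] at h1; exact h1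
      _ < a ^ (k + 1) + a ^ (k + 1) := by linarith
      _ ≤ a ^ k := by rw [h202]; have := pow_pos ha0 (k + 1); linarith
  have hinv : ∀ γ ∈ H, γ⁻¹ ∈ H := by
    intro γ hγ
    rw [hHmem]
    refine ⟨(hmemF _).2 (Γ.inv_mem (hHF γ hγ)), ?_⟩
    have : ‖γ⁻¹ x - x‖ = ‖γ (γ⁻¹ x) - γ x‖ := by
      rw [← LinearIsometryEquiv.map_sub, LinearIsometryEquiv.norm_map]
    rw [this]
    have hfix : γ (γ⁻¹ x) = x := by
      simp [LinearIsometryEquiv.coe_inv]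
    rw [hfix, norm_sub_rev]
    exact ((hHmem γ).1 hγ).2
  have hHne : H.Nonempty := ⟨1, hSone (k + 1)⟩
  have hcardpos : (0 : ℝ) < (H.card : ℝ) := by
    exact_mod_cast Finset.card_pos.mpr hHne
  set p : E := (H.card : ℝ)⁻¹ • ∑ γ ∈ H, γ x with hp
  -- p is fixed by every element of H
  have hfixp : ∀ γ ∈ H, γ p = p := by
    intro γ hγ
    have hsum : ∑ g ∈ H, γ (g x) = ∑ g ∈ H, g x := by
      refine Finset.sum_nbij' (fun g => γ * g) (fun g => γ⁻¹ * g) ?_ ?_ ?_ ?_ ?_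
      · intro g hg; exact hmul γ hγ g hg
      · intro g hg; exact hmul γ⁻¹ (hinv γ hγ) g hg
      · intro g hg; simp [← mul_assoc]
      · intro g hg; simp [← mul_assoc]
      · intro g hg; simp [LinearIsometryEquiv.coe_mul]
    calc γ p = (H.card : ℝ)⁻¹ • ∑ g ∈ H, γ (g x) := by
          rw [hp, map_smul, map_sum]
      _ = p := by rw [hsum, hp]
  -- p is close to x
  have hpx : ‖p - x‖ < a ^ (k + 1) := by
    have hrw : p - x = (H.card : ℝ)⁻¹ • ∑ γ ∈ H, (γ x - x) := by
      rw [Finset.sum_sub_distrib, smul_sub, Finset.sum_const, hp]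
      congr 1
      rw [← Nat.cast_smul_eq_nsmul ℝ, smul_smul, inv_mul_cancel₀ hcardpos.ne', one_smul]
    rw [hrw, norm_smul]
    have hb : ‖∑ γ ∈ H, (γ x - x)‖ < H.card * a ^ (k + 1) := by
      calc ‖∑ γ ∈ H, (γ x - x)‖ ≤ ∑ γ ∈ H, ‖γ x - x‖ := norm_sum_le _ _
        _ < ∑ _γ ∈ H, a ^ (k + 1) :=
            Finset.sum_lt_sum_of_nonempty hHne (fun γ hγ => ((hHmem γ).1 hγ).2)
        _ = H.card * a ^ (k + 1) := by rw [Finset.sum_const, nsmul_eq_mul]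
    have hinvpos : (0 : ℝ) < (H.card : ℝ)⁻¹ := inv_pos.mpr hcardpos
    have : ‖(H.card : ℝ)⁻¹‖ = (H.card : ℝ)⁻¹ := by
      rw [Real.norm_eq_abs, abs_of_pos hinvpos]
    rw [this]
    calc (H.card : ℝ)⁻¹ * ‖∑ γ ∈ H, (γ x - x)‖
        < (H.card : ℝ)⁻¹ * (H.card * a ^ (k + 1)) :=
          mul_lt_mul_of_pos_left hb hinvpos
      _ = a ^ (k + 1) := by
          rw [← mul_assoc, inv_mul_cancel₀ hcardpos.ne', one_mul]
  refine ⟨p, a ^ (k + 1), ⟨pow_le_pow_of_le_one ha0.le ha1.le (by omega),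
    pow_le_one₀ ha0.le ha1.le⟩, ?_, ?_⟩
  · rw [mem_ball, dist_eq_norm, norm_sub_rev]; exact hpx
  · intro γ hγΓ hγp
    have hγnH : γ ∉ H := fun h => hγp (hfixp γ h)
    have hγSk : γ ∉ S k := by rw [hkeq]; exact hγnH
    have hbig : a ^ k ≤ ‖γ x - x‖ := by
      by_contra hc
      push_neg at hc
      exact hγSk (by simp only [hS, Finset.mem_filter]; exact ⟨(hmemF γ).2 hγΓ, hc⟩)
    have hiso : ‖γ x - γ p‖ = ‖x - p‖ := by
      rw [← LinearIsometryEquiv.map_sub, LinearIsometryEquiv.norm_map]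
    have htri : ‖γ x - x‖ ≤ ‖γ x - γ p‖ + ‖γ p - p‖ + ‖p - x‖ := by
      have := norm_sub_le_norm_sub_add_norm_sub (γ x) (γ p) x
      have := norm_sub_le_norm_sub_add_norm_sub (γ p) p x
      linarith
    rw [hiso, norm_sub_rev x p] at htri
    rw [h202] at hbig
    linarith
end

section
/- Let L be a positive integer and let Γ be a finite subgroup of the orthogonal group O(L) acting linearly on Euclidean space ℝ^L. Define the singular set S̃(Γ) = {x ∈ ℝ^L : γ·x = x for some γ ∈ Γ with γ ≠ id}. Suppose x, y ∈ ℝ^L \ S̃(Γ) and γ₀ ∈ Γ realizes the minimum of ‖x − γ·y‖ over all γ ∈ Γ (i.e. ‖x − γ₀·y‖ ≤ ‖x − γ·y‖ for all γ ∈ Γ). Then the open segment from x to γ₀·y avoids the singular set: for every t ∈ (0,1), the point (1−t)·x + t·(γ₀·y) does not belong to S̃(Γ). -/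
open Metric Set

/-- Let `Γ` be a finite subgroup of `O(L)` acting on `ℝ^L`, with singular set
`S̃(Γ) = {x : ∃ nontrivial γ ∈ Γ, γ x = x}`. If `x, y` are regular points and `γ₀ ∈ Γ` realizes
the minimum of `‖x - γ y‖` over `γ ∈ Γ`, then the open segment from `x` to `γ₀ y` avoids the
singular set. -/
theorem segment_avoids_singular_set
    (L : ℕ) (hL : 0 < L)
    (Γ : Subgroup (EuclideanSpace ℝ (Fin L) ≃ₗᵢ[ℝ] EuclideanSpace ℝ (Fin L)))
    (hΓ : (Γ : Set (EuclideanSpace ℝ (Fin L) ≃ₗᵢ[ℝ] EuclideanSpace ℝ (Fin L))).Finite)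
    (x y : EuclideanSpace ℝ (Fin L))
    (hx : ¬ ∃ γ ∈ Γ, γ ≠ 1 ∧ γ x = x)
    (hy : ¬ ∃ γ ∈ Γ, γ ≠ 1 ∧ γ y = y)
    (γ₀ : EuclideanSpace ℝ (Fin L) ≃ₗᵢ[ℝ] EuclideanSpace ℝ (Fin L))
    (hγ₀ : γ₀ ∈ Γ)
    (hmin : ∀ γ ∈ Γ, ‖x - γ₀ y‖ ≤ ‖x - γ y‖) :
    ∀ t ∈ Set.Ioo (0 : ℝ) 1,
      ¬ ∃ γ ∈ Γ, γ ≠ 1 ∧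
        γ ((1 - t) • x + t • (γ₀ y)) = (1 - t) • x + t • (γ₀ y) := by
  rintro t ⟨ht0, ht1⟩ ⟨γ, hγ, hγne, hfix⟩
  set z := (1 - t) • x + t • (γ₀ y) with hz
  have hxy : x ≠ γ₀ y := by
    intro h
    have hzx : z = x := by rw [hz, ← h]; module
    exact hx ⟨γ, hγ, hγne, by rw [← hzx]; exact hfix⟩
  set u := x - γ₀ y with hu
  have hune : u ≠ 0 := sub_ne_zero.mpr hxy
  have ha : x - z = t • u := by rw [hz, hu]; module
  have hb : z - γ₀ y = (1 - t) • u := by rw [hz, hu]; module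
  have hna : ‖x - z‖ = t * ‖u‖ := by
    rw [ha, norm_smul, Real.norm_eq_abs, abs_of_pos ht0]
  have hnb : ‖z - γ (γ₀ y)‖ = (1 - t) * ‖u‖ := by
    calc ‖z - γ (γ₀ y)‖ = ‖γ z - γ (γ₀ y)‖ := by rw [hfix]
      _ = ‖z - γ₀ y‖ := by rw [← map_sub, γ.norm_map]
      _ = (1 - t) * ‖u‖ := by
          rw [hb, norm_smul, Real.norm_eq_abs, abs_of_pos (by linarith)]
  have hmul : (γ * γ₀) y = γ (γ₀ y) := rfl
  have hmin' : ‖u‖ ≤ ‖x - γ (γ₀ y)‖ := by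
    have := hmin (γ * γ₀) (mul_mem hγ hγ₀)
    rwa [hmul] at this
  have hsum : (x - z) + (z - γ (γ₀ y)) = x - γ (γ₀ y) := by abel
  have htri : ‖(x - z) + (z - γ (γ₀ y))‖ = ‖x - z‖ + ‖z - γ (γ₀ y)‖ := by
    apply le_antisymm (norm_add_le _ _)
    rw [hsum, hna, hnb]
    calc t * ‖u‖ + (1 - t) * ‖u‖ = ‖u‖ := by ring
      _ ≤ ‖x - γ (γ₀ y)‖ := hmin'
  have hray : SameRay ℝ (x - z) (z - γ (γ₀ y)) := sameRay_iff_norm_add.mpr htri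
  have hane : x - z ≠ 0 := by
    rw [ha]; exact smul_ne_zero ht0.ne' hune
  obtain ⟨r, hr, hrb⟩ := hray.exists_nonneg_left hane
  have hrb' : z - γ (γ₀ y) = (r * t) • u := by
    rw [← hrb, ha, smul_smul]
  have hrt : r * t = 1 - t := by
    have h1 : ‖(r * t) • u‖ = (1 - t) * ‖u‖ := by rw [← hrb', hnb]
    rw [norm_smul, Real.norm_eq_abs, abs_of_nonneg (by positivity)] at h1
    have : r * t = 1 - t := by
      have := mul_right_cancel₀ (norm_ne_zero_iff.mpr hune) h1
      exact this
    exact this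
  have hfixy : γ (γ₀ y) = γ₀ y := by
    have h2 : z - γ (γ₀ y) = z - γ₀ y := by rw [hrb', hrt, hb]
    exact sub_right_injective h2
  refine hy ⟨γ₀⁻¹ * γ * γ₀, ?_, ?_, ?_⟩
  · exact mul_mem (mul_mem (inv_mem hγ₀) hγ) hγ₀
  · intro h
    apply hγne
    have : γ₀ * (γ₀⁻¹ * γ * γ₀) * γ₀⁻¹ = γ := by group
    rw [h] at this
    simpa using this.symm
  · show γ₀⁻¹ (γ (γ₀ y)) = y
    rw [hfixy]
    simp
end

section
/- Let n be a positive integer and let Γ be a finite subgroup of the unitary group U(n) acting linearly on ℂ^n. Define the singular set S̃(Γ) = {x ∈ ℂ^n : γ·x = x for some γ ∈ Γ with γ ≠ id}. Then there exists δ₁ > 0, depending only on Γ, such that for every δ ∈ (0, δ₁] and every z ∈ ℂ^n, the Lebesgue measure of B(z,1) ∩ T_δ(S̃(Γ)) is at most (1/100) times the Lebesgue measure of B(z,1), where T_δ denotes the open δ-neighborhood (metric thickening) of a set and B(z,1) is the open unit ball centered at z. -/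
open Metric Set MeasureTheory ENNReal

/-- The Borel measurable structure on complex Euclidean space `ℂ^n`. -/
noncomputable instance euclideanComplexMeasurableSpace (n : ℕ) :
    MeasurableSpace (EuclideanSpace ℂ (Fin n)) := borel _

instance euclideanComplexBorelSpace (n : ℕ) :
    BorelSpace (EuclideanSpace ℂ (Fin n)) := ⟨rfl⟩

section Aux

variable {E : Type*} [NormedAddCommGroup E] [NormedSpace ℝ E]
  [MeasurableSpace E] [BorelSpace E]

/-- Translation step: intersection of a unit ball with the thickening of a subspace has
measure at most that of `ball 0 3` intersected with the same thickening. -/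
lemma aux_ball_inter_thickening_le (μ : Measure E) [μ.IsAddHaarMeasure]
    (V : Submodule ℝ E) {δ : ℝ} (hδ : δ ≤ 1) (z : E) :
    μ (ball z 1 ∩ thickening δ (V : Set E)) ≤ μ (ball 0 3 ∩ thickening δ (V : Set E)) := by
  rcases (ball z 1 ∩ thickening δ (V : Set E)).eq_empty_or_nonempty with h | ⟨x, hx⟩
  · simp [h]
  obtain ⟨v, hv, hxv⟩ := mem_thickening_iff.1 hx.2
  have hzx : dist x z < 1 := mem_ball.1 hx.1
  have hzv : dist z v < 2 := by
    calc dist z v ≤ dist z x + dist x v := dist_triangle _ _ _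
      _ < 1 + 1 := by
        have := dist_comm z x ▸ hzx
        linarith [hxv, hδ, this]
      _ = 2 := by norm_num
  have key : (fun y => v + y) ⁻¹' (ball z 1 ∩ thickening δ (V : Set E))
      = ball (z - v) 1 ∩ thickening δ (V : Set E) := by
    ext y
    simp only [Set.mem_preimage, Set.mem_inter_iff, mem_ball, mem_thickening_iff]
    constructor
    · rintro ⟨h1, w, hw, hw2⟩
      refine ⟨by rw [dist_eq_norm] at h1 ⊢; convert h1 using 2; abel, w - v, V.sub_mem hw hv, ?_⟩
      rw [dist_eq_norm] at hw2 ⊢; convert hw2 using 2; abel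
    · rintro ⟨h1, w, hw, hw2⟩
      refine ⟨by rw [dist_eq_norm] at h1 ⊢; convert h1 using 2; abel, w + v, V.add_mem hw hv, ?_⟩
      rw [dist_eq_norm] at hw2 ⊢; convert hw2 using 2; abel
  calc μ (ball z 1 ∩ thickening δ (V : Set E))
      = μ ((fun y => v + y) ⁻¹' (ball z 1 ∩ thickening δ (V : Set E))) :=
        (measure_preimage_add μ v _).symm
    _ = μ (ball (z - v) 1 ∩ thickening δ (V : Set E)) := by rw [key]
    _ ≤ μ (ball 0 3 ∩ thickening δ (V : Set E)) := by
        refine measure_mono (Set.inter_subset_inter_left _ (ball_subset_ball' ?_))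
        have : dist (z - v) 0 < 2 := by
          rw [dist_eq_norm, sub_zero, ← dist_eq_norm]; exact hzv
        linarith

end Aux

/-- The fixed-point set of a linear isometric equivalence, as a real submodule. -/
noncomputable def fixSubmodule {n : ℕ}
    (γ : EuclideanSpace ℂ (Fin n) ≃ₗᵢ[ℂ] EuclideanSpace ℂ (Fin n)) :
    Submodule ℝ (EuclideanSpace ℂ (Fin n)) :=
  LinearMap.ker ((γ.toLinearEquiv.toLinearMap.restrictScalars ℝ) - LinearMap.id)

lemma mem_fixSubmodule_iff {n : ℕ}
    (γ : EuclideanSpace ℂ (Fin n) ≃ₗᵢ[ℂ] EuclideanSpace ℂ (Fin n))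
    (x : EuclideanSpace ℂ (Fin n)) : x ∈ fixSubmodule γ ↔ γ x = x := by
  simp [fixSubmodule, LinearMap.mem_ker, LinearMap.sub_apply, sub_eq_zero]

lemma fixSubmodule_ne_top {n : ℕ}
    {γ : EuclideanSpace ℂ (Fin n) ≃ₗᵢ[ℂ] EuclideanSpace ℂ (Fin n)} (hγ : γ ≠ 1) :
    fixSubmodule γ ≠ ⊤ := by
  intro h
  apply hγ
  have : ∀ x, γ x = x := fun x =>
    (mem_fixSubmodule_iff γ x).1 (h ▸ Submodule.mem_top)
  exact LinearIsometryEquiv.ext fun x => (this x).trans rfl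

/-- Let `Γ` be a finite subgroup of the unitary group `U(n)` (realized as the
group of `ℂ`-linear isometric self-equivalences of `ℂ^n`), with singular set
`S̃(Γ) = {x : ∃ nontrivial γ ∈ Γ, γ x = x}`. There exists `δ₁ > 0`, depending only on `Γ`,
such that for every `δ ∈ (0, δ₁]` and every `z ∈ ℂ^n`, the Lebesgue measure (any additive Haar
measure) of `B(z,1) ∩ T_δ(S̃(Γ))` is at most `1/100` of that of `B(z,1)`. -/
theorem volume_thickening_singular_set_le
    (n : ℕ) (hn : 0 < n)
    (Γ : Subgroup (EuclideanSpace ℂ (Fin n) ≃ₗᵢ[ℂ] EuclideanSpace ℂ (Fin n)))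
    (hΓ : (Γ : Set (EuclideanSpace ℂ (Fin n) ≃ₗᵢ[ℂ] EuclideanSpace ℂ (Fin n))).Finite) :
    ∃ δ₁ : ℝ, 0 < δ₁ ∧
      ∀ (μ : Measure (EuclideanSpace ℂ (Fin n))), μ.IsAddHaarMeasure →
        ∀ δ ∈ Set.Ioc (0 : ℝ) δ₁, ∀ z : EuclideanSpace ℂ (Fin n),
          μ (Metric.ball z 1 ∩
              Metric.thickening δ {x | ∃ γ ∈ Γ, γ ≠ 1 ∧ γ x = x}) ≤
            (1 / 100 : ℝ≥0∞) * μ (Metric.ball z 1) := by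
  classical
  set E := EuclideanSpace ℂ (Fin n) with hE
  set S : Set E := {x | ∃ γ ∈ Γ, γ ≠ 1 ∧ γ x = x} with hS
  have hTfin : {γ : E ≃ₗᵢ[ℂ] E | γ ∈ Γ ∧ γ ≠ 1}.Finite :=
    hΓ.subset fun γ hγ => hγ.1
  set F : Finset (E ≃ₗᵢ[ℂ] E) := hTfin.toFinset with hF
  let ν : Measure E := (Module.finBasis ℝ E).addHaar
  set b : ℝ≥0∞ := ν (ball 0 1) with hb
  set c : ℝ≥0∞ := (F.card : ℝ≥0∞) + 1 with hc
  set ε : ℝ≥0∞ := b / (100 * c) with hε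
  have hbne : b ≠ ∞ := measure_ball_lt_top.ne
  have hbpos : 0 < b := measure_ball_pos ν 0 one_pos
  have hcne : c ≠ 0 := by simp [hc]
  have hcne' : c ≠ ∞ := by simp [hc]
  have hεpos : 0 < ε := ENNReal.div_pos hbpos.ne' (by finiteness)
  -- eventual smallness of thickenings of truncated fixed subspaces
  have hev : ∀ᶠ δ in nhdsWithin (0:ℝ) (Set.Ioi 0), ∀ γ ∈ F,
      ν (thickening δ ((fixSubmodule γ : Set E) ∩ closedBall 0 5)) < ε := by
    rw [Filter.eventually_all_finset]
    intro γ hγF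
    have hγ : γ ∈ Γ ∧ γ ≠ 1 := hTfin.mem_toFinset.1 hγF
    set s : Set E := (fixSubmodule γ : Set E) ∩ closedBall 0 5 with hs
    have hfin : ∃ R > 0, ν (thickening R s) ≠ ∞ := by
      refine ⟨1, one_pos, ((measure_mono ?_).trans_lt
        (measure_closedBall_lt_top (x := (0:E)) (r := 7))).ne⟩
      intro x hx
      obtain ⟨v, hv, hd⟩ := mem_thickening_iff.1 hx
      have h1 : dist v (0:E) ≤ 5 := mem_closedBall.1 hv.2
      have : dist x (0:E) ≤ dist x v + dist v 0 := dist_triangle _ _ _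
      exact mem_closedBall.2 (by linarith)
    have hlim := tendsto_measure_thickening (μ := ν) hfin
    have hcl : ν (closure s) = 0 := by
      refine measure_mono_null (closure_minimal Set.inter_subset_left ?_) ?_
      · exact (fixSubmodule γ).closed_of_finiteDimensional
      · exact Measure.addHaar_submodule ν _ (fixSubmodule_ne_top hγ.2)
    rw [hcl] at hlim
    exact hlim.eventually_lt_const hεpos
  obtain ⟨u, hu, huI⟩ := mem_nhdsGT_iff_exists_Ioc_subset.1 hev
  refine ⟨min 1 u, lt_min one_pos hu, ?_⟩
  intro μ hμ δ hδ z
  haveI := hμ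
  have hδ1 : δ ≤ 1 := hδ.2.trans (min_le_left _ _)
  have hQ := huI ⟨hδ.1, hδ.2.trans (min_le_right _ _)⟩
  -- per-subspace bound near the origin
  have hball3 : ∀ γ ∈ F, ν (ball 0 3 ∩ thickening δ (fixSubmodule γ : Set E)) ≤ ε := by
    intro γ hγ
    refine le_trans (measure_mono ?_) (hQ γ hγ).le
    intro x hx
    obtain ⟨v, hv, hd⟩ := mem_thickening_iff.1 hx.2
    refine mem_thickening_iff.2 ⟨v, ⟨hv, ?_⟩, hd⟩
    have h1 : dist x (0:E) < 3 := mem_ball.1 hx.1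
    have : dist v (0:E) ≤ dist v x + dist x 0 := dist_triangle _ _ _
    have h2 : dist v x < 1 := by rw [dist_comm]; linarith
    exact mem_closedBall.2 (by linarith)
  have hthick : thickening δ S ⊆ ⋃ γ ∈ F, thickening δ (fixSubmodule γ : Set E) := by
    intro x hx
    obtain ⟨y, hy, hd⟩ := mem_thickening_iff.1 hx
    obtain ⟨γ, hγΓ, hγ1, hfix⟩ := hy
    refine Set.mem_iUnion₂.2 ⟨γ, hTfin.mem_toFinset.2 ⟨hγΓ, hγ1⟩,
      mem_thickening_iff.2 ⟨y, (mem_fixSubmodule_iff γ y).2 hfix, hd⟩⟩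
  have harith : (F.card : ℝ≥0∞) * ε ≤ (1 / 100) * b := by
    have h1 : (F.card : ℝ≥0∞) * ε ≤ c * ε :=
      mul_le_mul_left (by simp [hc, le_add_right]) ε
    have h2 : c * ε = b / 100 := by
      rw [hε, ← mul_div_assoc, mul_comm (100 : ℝ≥0∞) c]
      exact ENNReal.mul_div_mul_left b 100 hcne hcne'
    rw [one_div, ← ENNReal.div_eq_inv_mul]
    exact h1.trans h2.le
  have hν : ν (ball z 1 ∩ thickening δ S) ≤ (1 / 100) * ν (ball z 1) := by
    calc ν (ball z 1 ∩ thickening δ S)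
        ≤ ν (⋃ γ ∈ F, ball z 1 ∩ thickening δ (fixSubmodule γ : Set E)) := by
          refine measure_mono fun x hx => ?_
          obtain ⟨γ, hγ, hxγ⟩ := Set.mem_iUnion₂.1 (hthick hx.2)
          exact Set.mem_iUnion₂.2 ⟨γ, hγ, hx.1, hxγ⟩
      _ ≤ ∑ γ ∈ F, ν (ball z 1 ∩ thickening δ (fixSubmodule γ : Set E)) :=
          measure_biUnion_finset_le F _
      _ ≤ ∑ _γ ∈ F, ε := Finset.sum_le_sum fun γ hγ =>
          (aux_ball_inter_thickening_le ν _ hδ1 z).trans (hball3 γ hγ)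
      _ = (F.card : ℝ≥0∞) * ε := by rw [Finset.sum_const, nsmul_eq_mul]
      _ ≤ (1 / 100) * b := harith
      _ = (1 / 100) * ν (ball z 1) := by rw [Measure.addHaar_ball_center ν z 1]
  have key : μ = Measure.addHaarScalarFactor μ ν • ν :=
    Measure.isAddLeftInvariant_eq_smul μ ν
  rw [key]
  simp only [Measure.smul_apply, smul_eq_mul]
  calc (Measure.addHaarScalarFactor μ ν : ℝ≥0∞) * ν (ball z 1 ∩ thickening δ S)
      ≤ (Measure.addHaarScalarFactor μ ν : ℝ≥0∞) * ((1 / 100) * ν (ball z 1)) :=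
        mul_le_mul_right hν _
    _ = (1 / 100) * ((Measure.addHaarScalarFactor μ ν : ℝ≥0∞) * ν (ball z 1)) := by ring
end

section
/- Let L be a positive integer and let V ⊂ ℝ^L be a real linear subspace with dim V ≤ L − 2. Then for every ε > 0 there exists δ > 0 such that for every z ∈ ℝ^L, the Lebesgue measure of B(z,1) ∩ T_δ(V) is at most ε times the Lebesgue measure of B(z,1), where T_δ(V) = {x ∈ ℝ^L : dist(x,V) < δ} is the open δ-neighborhood of V and B(z,1) is the open unit ball centered at z. -/
/-!
A unit vector `u ⊥ V` confines the `δ`-neighbourhood of `V` to the slab `|⟪u, x⟫| < δ`.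
In an orthonormal basis containing `u`, the part of the slab inside `B(z, 1)` lies in a box
with one side `2δ` and all other sides `2`, so its volume is `O(δ)` uniformly in `z`.
-/

open Metric Set MeasureTheory ENNReal

open scoped RealInnerProductSpace

section

variable {E : Type*} [NormedAddCommGroup E] [InnerProductSpace ℝ E]

theorem Submodule.exists_norm_eq_one_mem_orthogonal [FiniteDimensional ℝ E]
    {V : Submodule ℝ E} (hV : V ≠ ⊤) : ∃ u ∈ Vᗮ, ‖u‖ = 1 := by
  obtain ⟨v, hv, hv0⟩ :=
    Submodule.exists_mem_ne_zero_of_ne_bot (mt V.orthogonal_eq_bot_iff.mp hV)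
  exact ⟨‖v‖⁻¹ • v, Vᗮ.smul_mem _ hv, norm_smul_inv_norm hv0⟩

theorem thickening_subset_inner_preimage_ball {V : Submodule ℝ E} {u : E} (hu : u ∈ Vᗮ)
    (hu1 : ‖u‖ = 1) (δ : ℝ) :
    thickening δ (V : Set E) ⊆ (fun x => ⟪u, x⟫) ⁻¹' ball 0 δ := by
  intro x hx
  obtain ⟨p, hp, hxp⟩ := mem_thickening_iff.mp hx
  have hup : ⟪u, p⟫ = 0 := Submodule.inner_left_of_mem_orthogonal hp hu
  calc dist ⟪u, x⟫ 0 = |⟪u, x - p⟫| := by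
        rw [inner_sub_right, hup, sub_zero, Real.dist_0_eq_abs]
    _ ≤ ‖u‖ * ‖x - p‖ := abs_real_inner_le_norm _ _
    _ < δ := by rwa [hu1, one_mul, ← dist_eq_norm]

theorem exists_orthonormalBasis_apply_eq [FiniteDimensional ℝ E] {u : E} (hu : ‖u‖ = 1) :
    ∃ (ι : Finset E) (b : OrthonormalBasis ι ℝ E) (i : ι), b i = u := by
  classical
  have hsingle : Orthonormal ℝ ((↑) : ({u} : Set E) → E) := by
    rw [orthonormal_subtype_iff_ite]
    rintro v rfl w rfl
    simp [hu]
  obtain ⟨ι, b, hu_mem, hb⟩ := hsingle.exists_orthonormalBasis_extension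
  exact ⟨ι, b, ⟨u, hu_mem rfl⟩, by rw [hb]⟩

variable [FiniteDimensional ℝ E] [MeasurableSpace E] [BorelSpace E]

theorem OrthonormalBasis.volume_ball_inter_repr_preimage_le {ι : Type*} [Fintype ι]
    (b : OrthonormalBasis ι ℝ E) (i : ι) (z : E) (r : ℝ) (s : Set ℝ) :
    volume (ball z r ∩ (fun x => b.repr x i) ⁻¹' s) ≤
      volume s * ENNReal.ofReal (2 * r) ^ (Fintype.card ι - 1) := by
  classical
  let e : E ≃ᵐ (ι → ℝ) := b.measurableEquiv.trans (MeasurableEquiv.toLp 2 (ι → ℝ)).symm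
  have he : MeasurePreserving e volume volume :=
    (EuclideanSpace.volume_preserving_symm_measurableEquiv_toLp ι).comp
      b.measurePreserving_measurableEquiv
  let box : ι → Set ℝ := Function.update (fun j => ball (b.repr z j) r) i s
  have hsub : ball z r ∩ (fun x => b.repr x i) ⁻¹' s ⊆ e ⁻¹' univ.pi box := by
    rintro x ⟨hxz, hxs⟩ j -
    rcases eq_or_ne j i with rfl | hji
    · simp only [box, Function.update_self]
      exact hxs
    · simp only [box, Function.update_of_ne hji, mem_ball]
      calc dist (b.repr x j) (b.repr z j) ≤ dist (b.repr x) (b.repr z) :=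
            PiLp.dist_apply_le _ _ _
        _ = dist x z := b.repr.dist_map x z
        _ < r := hxz
  calc volume (ball z r ∩ (fun x => b.repr x i) ⁻¹' s) ≤ volume (e ⁻¹' univ.pi box) :=
        measure_mono hsub
    _ = ∏ j, volume (box j) := by rw [he.measure_preimage_equiv, volume_pi_pi]
    _ = volume s * ENNReal.ofReal (2 * r) ^ (Fintype.card ι - 1) := by
        rw [Finset.prod_congr rfl fun j _ => Function.apply_update (fun _ t => volume t) _ i s j]
        rw [Finset.prod_update_of_mem (Finset.mem_univ i)]
        simp [Real.volume_ball, Finset.card_sdiff]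
end

theorem volume_thickening_subspace_le_general
    (L : ℕ)
    (V : Submodule ℝ (EuclideanSpace ℝ (Fin L)))
    (hV : Module.finrank ℝ V + 2 ≤ L) :
    ∀ ε : ℝ, 0 < ε →
      ∃ δ : ℝ, 0 < δ ∧
        ∀ z : EuclideanSpace ℝ (Fin L),
          volume (Metric.ball z 1 ∩ Metric.thickening δ (V : Set (EuclideanSpace ℝ (Fin L)))) ≤
            ENNReal.ofReal ε * volume (Metric.ball z 1) := by
  intro ε hε
  have hV_ne_top : V ≠ ⊤ := by
    rintro rfl
    simp [finrank_top] at hV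
  obtain ⟨u, huV, hu⟩ := V.exists_norm_eq_one_mem_orthogonal hV_ne_top
  obtain ⟨ι, b, i, rfl⟩ := exists_orthonormalBasis_apply_eq hu
  have hK : ENNReal.ofReal (2 * 1) ^ (Fintype.card ι - 1) ≠ ∞ := pow_ne_top ofReal_ne_top
  have hε_ball : ENNReal.ofReal ε * volume (ball (0 : EuclideanSpace ℝ (Fin L)) 1) ≠ 0 :=
    mul_ne_zero (ofReal_pos.2 hε).ne' (measure_ball_pos _ _ one_pos).ne'
  obtain ⟨η, hη, hηK⟩ := exists_nnreal_pos_mul_lt hK hε_ball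
  refine ⟨η / 2, by positivity, fun z => ?_⟩
  have hslab : thickening (η / 2) (V : Set (EuclideanSpace ℝ (Fin L))) ⊆
      (fun x => b.repr x i) ⁻¹' ball 0 (η / 2) := by
    simpa only [b.repr_apply_apply] using thickening_subset_inner_preimage_ball huV hu (η / 2)
  calc volume (ball z 1 ∩ thickening (η / 2) (V : Set (EuclideanSpace ℝ (Fin L))))
      ≤ volume (ball z 1 ∩ (fun x => b.repr x i) ⁻¹' ball 0 (η / 2)) :=
        measure_mono (inter_subset_inter_right _ hslab)
    _ ≤ volume (ball (0 : ℝ) (η / 2)) * ENNReal.ofReal (2 * 1) ^ (Fintype.card ι - 1) :=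
        b.volume_ball_inter_repr_preimage_le i z 1 _
    _ = η * ENNReal.ofReal (2 * 1) ^ (Fintype.card ι - 1) := by
        rw [Real.volume_ball, mul_div_cancel₀ _ two_ne_zero, ofReal_coe_nnreal]
    _ ≤ ENNReal.ofReal ε * volume (ball z 1) := by
        rw [Measure.addHaar_ball_center]
        exact hηK.le

/-- Let `V ⊆ ℝ^L` be a linear subspace of codimension at least `2`
(i.e. `dim V ≤ L - 2`). For every `ε > 0` there is `δ > 0` such that for every `z ∈ ℝ^L`
the Lebesgue measure of `B(z,1) ∩ T_δ(V)` is at most `ε` times that of `B(z,1)`. -/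
theorem volume_thickening_subspace_le
    (L : ℕ) (hL : 0 < L)
    (V : Submodule ℝ (EuclideanSpace ℝ (Fin L)))
    (hV : Module.finrank ℝ V + 2 ≤ L) :
    ∀ ε : ℝ, 0 < ε →
      ∃ δ : ℝ, 0 < δ ∧
        ∀ z : EuclideanSpace ℝ (Fin L),
          volume (Metric.ball z 1 ∩ Metric.thickening δ (V : Set (EuclideanSpace ℝ (Fin L)))) ≤
            ENNReal.ofReal ε * volume (Metric.ball z 1) :=
  volume_thickening_subspace_le_general L V hV
end
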